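/- Let a_1,...,a_n be pairwise coprime positive integers with a_1 even, and b_1,...,b_n integers with Σ_i b_i·(a_1···a_n)/a_i = 1 and all a_i - b_i odd. Then 1/8 + (1/2)·Σ_i s((a_1···a_n)/a_i, a_i) + Σ_i s((a_1···a_n)/a_i, a_i; 1/2, 1/2) = 1/8 + (1/2)·Σ_i s(a_i - b_i, a_i) - Σ_i s(a_i - b_i, 2a_i). -/

import Mathlib

open Finset Real

open Classical in
/-- The sawtooth function: 0 on integers, fractional part minus 1/2 otherwise. -/
noncomputable def saw (x : ℝ) : ℝ :=
  if ∃ n : ℤ, x = n then 0 else Int.fract x - 1/2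

/-- The Dedekind sum s(q,p). -/
noncomputable def dedekindSum (q : ℤ) (p : ℕ) : ℝ :=
  ∑ μ ∈ Finset.range p, saw ((μ : ℝ) / p) * saw ((q : ℝ) * μ / p)

/-- The Dedekind–Rademacher sum s(q,p;x,y). -/
noncomputable def drSum (q : ℤ) (p : ℕ) (x y : ℝ) : ℝ :=
  ∑ μ ∈ Finset.range p, saw (((μ : ℝ) + y) / p) * saw ((q : ℝ) * ((μ : ℝ) + y) / p + x)

/-!
Write `A = ∏_{j ≠ i} a_j`, `a = a_i`, `c = a_i - b_i`; the identity holds term by term.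
Splitting `s(A + a, 2a)` into even and odd `μ` gives `s(A, a; 1/2, 1/2) = s(A + a, 2a) - s(A, a)`.
The Bezout relation together with the parity hypotheses gives `(A + a) c ≡ -1 mod 2a`, hence
`A c ≡ -1 mod a`. Since `s(q, p)` is odd in `q` and satisfies `s(q, p) = s(q', p)` whenever
`q q' ≡ 1 mod p`, this turns `s(c, a)` into `-s(A, a)` and `s(c, 2a)` into `-s(A + a, 2a)`.
-/

lemma saw_add_intCast (x : ℝ) (n : ℤ) : saw (x + n) = saw x := by
  unfold saw
  split_ifs with h1 h2 h2
  · rfl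
  · obtain ⟨m, hm⟩ := h1; exact absurd ⟨m - n, by push_cast; linarith⟩ h2
  · obtain ⟨m, rfl⟩ := h2; exact absurd ⟨m + n, by push_cast; ring⟩ h1
  · rw [Int.fract_add_intCast]

lemma saw_neg (x : ℝ) : saw (-x) = -saw x := by
  unfold saw
  split_ifs with h1 h2 h2
  · ring
  · obtain ⟨m, hm⟩ := h1; exact absurd ⟨-m, by push_cast; linarith⟩ h2
  · obtain ⟨m, rfl⟩ := h2; exact absurd ⟨-m, by push_cast; ring⟩ h1
  · have hfract : Int.fract x ≠ 0 := fun h0 =>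
      h2 ⟨⌊x⌋, by linarith [Int.fract_add_floor x]⟩
    rw [Int.fract_neg hfract]; ring

noncomputable def sawMod (p : ℕ) (x : ZMod p) : ℝ := saw ((x.val : ℝ) / p)

lemma sawMod_intCast {p : ℕ} [NeZero p] (x : ℤ) : sawMod p x = saw (x / p) := by
  have hp : (p : ℝ) ≠ 0 := Nat.cast_ne_zero.2 (NeZero.ne p)
  have hval : (((x : ZMod p).val : ℤ) : ℝ) = x - p * (x / p : ℤ) := by
    rw [ZMod.val_intCast, Int.emod_def]; push_cast; ring
  rw [sawMod, ← saw_add_intCast _ (x / p : ℤ)]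
  congr 1
  rw [← Int.cast_natCast, hval]
  field_simp
  ring

lemma sawMod_natCast {p : ℕ} [NeZero p] (x : ℕ) : sawMod p x = saw (x / p) := by
  simpa using sawMod_intCast (p := p) x

/-- Over `ZMod p`, invariance of `s(q, p)` under changes of `q` becomes a change of variables. -/
lemma dedekindSum_eq_sum_zmod (q : ℤ) (p : ℕ) [NeZero p] :
    dedekindSum q p = ∑ x : ZMod p, sawMod p x * sawMod p (q * x) := by
  refine Finset.sum_nbij' (fun μ => (μ : ZMod p)) (fun x => x.val) ?_ ?_ ?_ ?_ ?_
  · simp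
  · simp [ZMod.val_lt]
  · intro μ hμ; exact ZMod.val_cast_of_lt (Finset.mem_range.1 hμ)
  · intro x _; exact ZMod.natCast_zmod_val x
  · intro μ _
    rw [sawMod_natCast, show (q : ZMod p) * μ = ((q * μ : ℤ) : ZMod p) by push_cast; rfl,
      sawMod_intCast]
    push_cast; rfl

lemma dedekindSum_neg (q : ℤ) (p : ℕ) : dedekindSum (-q) p = -dedekindSum q p := by
  rw [dedekindSum, dedekindSum, ← Finset.sum_neg_distrib]
  refine Finset.sum_congr rfl fun μ _ => ?_
  rw [Int.cast_neg, neg_mul, neg_div, saw_neg, mul_neg]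

lemma dedekindSum_congr {q q' : ℤ} {p : ℕ} (h : q ≡ q' [ZMOD p]) :
    dedekindSum q p = dedekindSum q' p := by
  rcases p with _ | p
  · simp [dedekindSum]
  · rw [dedekindSum_eq_sum_zmod, dedekindSum_eq_sum_zmod,
      (ZMod.intCast_eq_intCast_iff _ _ _).2 h]

lemma dedekindSum_eq_of_mul_modEq_one {q q' : ℤ} {p : ℕ} (h : q * q' ≡ 1 [ZMOD p]) :
    dedekindSum q p = dedekindSum q' p := by
  rcases p with _ | p
  · simp [dedekindSum]
  have hunit : (q : ZMod (p + 1)) * q' = 1 := by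
    exact_mod_cast (ZMod.intCast_eq_intCast_iff _ _ _).2 h
  let u : (ZMod (p + 1))ˣ := ⟨q, q', hunit, by rw [mul_comm, hunit]⟩
  rw [dedekindSum_eq_sum_zmod, dedekindSum_eq_sum_zmod]
  refine Fintype.sum_equiv (Units.mulLeft u) _ _ fun x => ?_
  rw [Units.mulLeft_apply, Units.val_mk, ← mul_assoc, mul_comm (q' : ZMod (p + 1)), hunit,
    one_mul, mul_comm]

lemma dedekindSum_eq_neg_of_mul_modEq_neg_one {q c : ℤ} {p : ℕ} (h : q * c ≡ -1 [ZMOD p]) :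
    dedekindSum c p = -dedekindSum q p := by
  rw [dedekindSum_eq_of_mul_modEq_one (q := q) (q' := -c) (by simpa using h.neg),
    dedekindSum_neg, neg_neg]

lemma Finset.sum_range_two_mul {M : Type*} [AddCommMonoid M] (a : ℕ) (f : ℕ → M) :
    ∑ μ ∈ range (2 * a), f μ = ∑ ν ∈ range a, (f (2 * ν) + f (2 * ν + 1)) := by
  induction a with
  | zero => simp
  | succ a ih => rw [Nat.mul_succ, sum_range_succ, sum_range_succ, sum_range_succ, ih, add_assoc]

lemma drSum_half_half (A : ℤ) (a : ℕ) :
    drSum A a (1/2) (1/2) = dedekindSum (A + a) (2 * a) - dedekindSum A a := by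
  rcases Nat.eq_zero_or_pos a with rfl | ha
  · simp [drSum, dedekindSum]
  have ha' : (a : ℝ) ≠ 0 := by positivity
  rw [eq_sub_iff_add_eq', ← dedekindSum_congr (Int.add_modEq_right (a := A) (n := a)),
    dedekindSum, dedekindSum, drSum, Finset.sum_range_two_mul, ← Finset.sum_add_distrib]
  refine Finset.sum_congr rfl fun ν _ => ?_
  congr 1
  · push_cast
    congr 2 <;> field_simp
  · have hodd : ((A + a : ℤ) : ℝ) * ((2 * ν + 1 : ℕ) : ℝ) / ((2 * a : ℕ) : ℝ)
        = (A * (ν + 1/2) / a + 1/2 : ℝ) + (ν : ℤ) := by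
      push_cast; field_simp; ring
    rw [hodd, saw_add_intCast]
    push_cast
    congr 1; field_simp

lemma half_dedekindSum_add_drSum {A c : ℤ} {a : ℕ} (h : (A + a) * c ≡ -1 [ZMOD 2 * a]) :
    1/2 * dedekindSum A a + drSum A a (1/2) (1/2)
      = 1/2 * dedekindSum c a - dedekindSum c (2 * a) := by
  have hmod_a : A * c ≡ -1 [ZMOD a] :=
    (Int.add_modEq_right.mul_right c).symm.trans (h.of_mul_left 2)
  rw [drSum_half_half, dedekindSum_eq_neg_of_mul_modEq_neg_one hmod_a,
    dedekindSum_eq_neg_of_mul_modEq_neg_one (q := A + a) (c := c) (p := 2 * a)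
      (by exact_mod_cast h)]
  ring

lemma add_mul_sub_modEq_neg_one {a A b : ℤ} (hab : Odd (a - b))
    (h : A * b ≡ 1 [ZMOD 2 * a]) : (A + a) * (a - b) ≡ -1 [ZMOD 2 * a] := by
  have hA : Odd A := (Int.odd_mul.1 (Int.odd_iff.2 (h.of_mul_right a))).1
  obtain ⟨m, hm⟩ := hA.add_odd hab
  obtain ⟨k, hk⟩ := h.dvd
  exact Int.modEq_iff_dvd.2 ⟨-k - m, by linear_combination -hk - a * hm⟩

lemma add_mul_sub_modEq_neg_one_of_odd {a A b : ℤ} (ha : Odd a) (hA : Even A)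
    (hab : Odd (a - b)) (h : A * b ≡ 1 [ZMOD a]) : (A + a) * (a - b) ≡ -1 [ZMOD 2 * a] := by
  have hmod_two : (A + a) * (a - b) ≡ -1 [ZMOD 2] :=
    (Int.odd_iff.1 ((hA.add_odd ha).mul hab)).trans (by decide)
  have hmod_a : (A + a) * (a - b) ≡ -1 [ZMOD a] := by
    obtain ⟨k, hk⟩ := h.dvd
    exact Int.modEq_iff_dvd.2 ⟨-k - (A + a - b), by linear_combination -hk⟩
  have hcop : Nat.Coprime (2 : ℤ).natAbs a.natAbs := Nat.coprime_two_left.2 (Int.natAbs_odd.2 ha)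
  exact (Int.modEq_and_modEq_iff_modEq_mul hcop).1 ⟨hmod_two, hmod_a⟩

section Cofactor

variable {ι : Type*} [Fintype ι] [DecidableEq ι] {a : ι → ℕ} {b : ι → ℤ}

def cofactor (a : ι → ℕ) (i : ι) : ℤ := ∏ j ∈ univ.erase i, (a j : ℤ)

lemma natCast_dvd_cofactor {i j : ι} (hij : i ≠ j) : (a i : ℤ) ∣ cofactor a j :=
  dvd_prod_of_mem _ (mem_erase.2 ⟨hij, mem_univ i⟩)

lemma cofactor_mul_modEq_one (hsum : ∑ j, b j * cofactor a j = 1) {d : ℤ} {i : ι}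
    (hd : ∀ j ≠ i, d ∣ b j * cofactor a j) : cofactor a i * b i ≡ 1 [ZMOD d] := by
  have hrest : 1 - cofactor a i * b i = ∑ j ∈ univ.erase i, b j * cofactor a j := by
    rw [← hsum, ← add_sum_erase _ _ (mem_univ i)]; ring
  exact Int.modEq_iff_dvd.2 (hrest ▸ dvd_sum fun j hj => hd j (ne_of_mem_erase hj))

/-- Since `a i₀` is even, every other `a j` is odd, so `b j` is even for `j ≠ i₀` and the
cofactor of `i` is even for `i ≠ i₀`. -/
lemma cofactor_add_mul_sub_modEq_neg_one {i₀ : ι} (heven : Even (a i₀))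
    (hcop : ∀ i j, i ≠ j → Nat.Coprime (a i) (a j)) (hsum : ∑ j, b j * cofactor a j = 1)
    (hodd : ∀ i, Odd ((a i : ℤ) - b i)) (i : ι) :
    (cofactor a i + a i) * (a i - b i) ≡ -1 [ZMOD 2 * a i] := by
  have odd_a {j : ι} (hj : j ≠ i₀) : Odd (a j : ℤ) :=
    (Int.odd_coe_nat _).2 <|
      Nat.coprime_two_left.1 ((hcop i₀ j hj.symm).coprime_dvd_left heven.two_dvd)
  by_cases hi : i = i₀
  · subst hi
    refine add_mul_sub_modEq_neg_one (hodd i) (cofactor_mul_modEq_one hsum fun j hj => ?_)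
    have hb : Even (b j) := by simpa using (odd_a hj).sub_odd (hodd j)
    exact mul_dvd_mul hb.two_dvd (natCast_dvd_cofactor hj.symm)
  · have two_dvd_a : (2 : ℤ) ∣ a i₀ := Int.natCast_dvd_natCast.2 heven.two_dvd
    have hA : Even (cofactor a i) :=
      even_iff_two_dvd.2 (two_dvd_a.trans (natCast_dvd_cofactor (Ne.symm hi)))
    exact add_mul_sub_modEq_neg_one_of_odd (odd_a hi) hA (hodd i) <|
      cofactor_mul_modEq_one hsum fun j hj => dvd_mul_of_dvd_right (natCast_dvd_cofactor hj.symm) _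

end Cofactor

theorem even_case_eta_eq_mu_general (n : ℕ) (a : Fin (n+1) → ℕ) (b : Fin (n+1) → ℤ)
    (heven : Even (a 0))
    (hcop : ∀ i j, i ≠ j → Nat.Coprime (a i) (a j))
    (hsum : ∑ i, b i * ∏ j ∈ Finset.univ.erase i, (a j : ℤ) = 1)
    (hodddiff : ∀ i, Odd ((a i : ℤ) - b i)) :
    1/8 + (1/2) * ∑ i, dedekindSum (∏ j ∈ Finset.univ.erase i, (a j : ℤ)) (a i)
      + ∑ i, drSum (∏ j ∈ Finset.univ.erase i, (a j : ℤ)) (a i) (1/2) (1/2)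
    = 1/8 + (1/2) * ∑ i, dedekindSum ((a i : ℤ) - b i) (a i)
      - ∑ i, dedekindSum ((a i : ℤ) - b i) (2 * a i) := by
  have key := Finset.sum_congr rfl fun i (_ : i ∈ univ) =>
    half_dedekindSum_add_drSum (cofactor_add_mul_sub_modEq_neg_one heven hcop hsum hodddiff i)
  rw [sum_add_distrib, sum_sub_distrib, ← mul_sum, ← mul_sum] at key
  simp only [cofactor] at key
  linarith

theorem even_case_eta_eq_mu (n : ℕ) (a : Fin (n+1) → ℕ) (b : Fin (n+1) → ℤ)
    (hpos : ∀ i, 0 < a i) (heven : Even (a 0))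
    (hcop : ∀ i j, i ≠ j → Nat.Coprime (a i) (a j))
    (hsum : ∑ i, b i * ∏ j ∈ Finset.univ.erase i, (a j : ℤ) = 1)
    (hodddiff : ∀ i, Odd ((a i : ℤ) - b i)) :
    1/8 + (1/2) * ∑ i, dedekindSum (∏ j ∈ Finset.univ.erase i, (a j : ℤ)) (a i)
      + ∑ i, drSum (∏ j ∈ Finset.univ.erase i, (a j : ℤ)) (a i) (1/2) (1/2)
    = 1/8 + (1/2) * ∑ i, dedekindSum ((a i : ℤ) - b i) (a i)
      - ∑ i, dedekindSum ((a i : ℤ) - b i) (2 * a i) :=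
  even_case_eta_eq_mu_general n a b heven hcop hsum hodddiff
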